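/- Stroock's coefficient bound in dimension one: for a polynomial φ, |∫ φ^{(n)} dγ| ≤ √(n!) · ‖φ‖_{L²(γ)} for every n ∈ ℕ. -/

import Mathlib

/-!
Gaussian integration by parts, `∫ p' dγ = ∫ x p(x) dγ`, combined with the Hermite recursion
`Hₙ₊₁ = X Hₙ - Hₙ'` gives `∫ φ⁽ⁿ⁾ dγ = ∫ φ Hₙ dγ` for every polynomial `φ`. Taking `φ = Hₙ`, which is
monic of degree `n`, yields `‖Hₙ‖²_{L²(γ)} = ∫ Hₙ⁽ⁿ⁾ dγ = n!`, and Cauchy–Schwarz in `L²(γ)` concludes.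
-/

open Polynomial MeasureTheory ProbabilityTheory
open scoped NNReal

lemma abs_integral_mul_le_sqrt_mul_sqrt {α : Type*} [MeasurableSpace α] {μ : Measure α}
    {f g : α → ℝ} (hf : MemLp f 2 μ) (hg : MemLp g 2 μ) :
    |∫ x, f x * g x ∂μ| ≤ √(∫ x, f x ^ 2 ∂μ) * √(∫ x, g x ^ 2 ∂μ) := by
  have holder := integral_mul_le_Lp_mul_Lq_of_nonneg Real.HolderConjugate.two_two
    (ae_of_all _ fun x => abs_nonneg (f x)) (ae_of_all _ fun x => abs_nonneg (g x))
    (by rw [ENNReal.ofReal_ofNat]; exact hf.abs) (by rw [ENNReal.ofReal_ofNat]; exact hg.abs)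
  simp only [Real.rpow_two, sq_abs, ← Real.sqrt_eq_rpow, ← abs_mul] at holder
  exact abs_integral_le_integral_abs.trans holder

lemma Polynomial.integrable_eval {μ : Measure ℝ} (h : ∀ k : ℕ, Integrable (fun x => x ^ k) μ)
    (p : ℝ[X]) : Integrable (fun x => p.eval x) μ := by
  induction p using Polynomial.induction_on' with
  | add p q hp hq => simp only [eval_add]; exact hp.add hq
  | monomial k a => simpa using (h k).const_mul a

lemma integrable_pow_gaussianReal (μ : ℝ) (v : ℝ≥0) (k : ℕ) :
    Integrable (fun x => x ^ k) (gaussianReal μ v) := by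
  refine (integrable_norm_iff (by fun_prop)).1 ?_
  simpa [norm_pow] using (memLp_id_gaussianReal (μ := μ) (v := v) k).integrable_norm_pow'

lemma integrable_eval_gaussianReal (μ : ℝ) (v : ℝ≥0) (p : ℝ[X]) :
    Integrable (fun x => p.eval x) (gaussianReal μ v) :=
  p.integrable_eval (integrable_pow_gaussianReal μ v)

lemma memLp_two_eval_gaussianReal (μ : ℝ) (v : ℝ≥0) (p : ℝ[X]) :
    MemLp (fun x => p.eval x) 2 (gaussianReal μ v) :=
  (memLp_two_iff_integrable_sq (by fun_prop)).2 <|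
    (integrable_eval_gaussianReal μ v (p ^ 2)).congr (ae_of_all _ fun _ => eval_pow 2)

lemma integrable_gaussianReal_iff {μ : ℝ} {v : ℝ≥0} (hv : v ≠ 0) {f : ℝ → ℝ} :
    Integrable f (gaussianReal μ v) ↔ Integrable (fun x => gaussianPDFReal μ v x * f x) := by
  rw [gaussianReal_of_var_ne_zero _ hv, integrable_withDensity_iff_integrable_smul'
    (measurable_gaussianPDF μ v) (ae_of_all _ fun _ => gaussianPDF_lt_top)]
  simp [gaussianPDF, gaussianPDFReal_nonneg]

lemma hasDerivAt_gaussianPDFReal (μ : ℝ) (v : ℝ≥0) (x : ℝ) :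
    HasDerivAt (gaussianPDFReal μ v) (-((x - μ) / v) * gaussianPDFReal μ v x) x := by
  have hexponent : HasDerivAt (fun y => -(y - μ) ^ 2 / (2 * v)) (-((x - μ) / v)) x :=
    ((((hasDerivAt_id x).sub_const μ).pow 2).neg.div_const (2 * (v : ℝ))).congr_deriv
      (by simp only [Nat.cast_ofNat, id_eq, Nat.add_one_sub_one, pow_one, mul_one]; ring)
  exact (hexponent.exp.const_mul (√(2 * Real.pi * v))⁻¹).congr_deriv
    (by rw [gaussianPDFReal]; ring)

theorem integral_derivative_eval_gaussianReal (μ : ℝ) {v : ℝ≥0} (hv : v ≠ 0) (p : ℝ[X]) :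
    ∫ x, (derivative p).eval x ∂gaussianReal μ v
      = ∫ x, (x - μ) / v * p.eval x ∂gaussianReal μ v := by
  set g := gaussianPDFReal μ v
  have hderiv (x : ℝ) : HasDerivAt (fun y => g y * p.eval y)
      (g x * (derivative p).eval x - g x * ((x - μ) / v * p.eval x)) x :=
    ((hasDerivAt_gaussianPDFReal μ v x).mul (p.hasDerivAt x)).congr_deriv (by ring)
  have hint (f : ℝ → ℝ) (hf : Integrable f (gaussianReal μ v)) :
      Integrable (fun x => g x * f x) :=
    (integrable_gaussianReal_iff hv).1 hf
  have hweight : Integrable (fun x => (x - μ) / v * p.eval x) (gaussianReal μ v) := by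
    refine ((integrable_eval_gaussianReal μ v ((X - C μ) * p)).div_const (v : ℝ)).congr
      (ae_of_all _ fun x => ?_)
    simp only [eval_mul, eval_sub, eval_X, eval_C]
    ring
  have hderiv_int := hint _ (integrable_eval_gaussianReal μ v (derivative p))
  have hzero := integral_eq_zero_of_hasDerivAt_of_integrable hderiv
    (hderiv_int.sub (hint _ hweight)) (hint _ (integrable_eval_gaussianReal μ v p))
  rw [integral_sub hderiv_int (hint _ hweight), sub_eq_zero] at hzero
  simpa only [integral_gaussianReal_eq_integral_smul hv, smul_eq_mul] using hzero

noncomputable def stdGaussianIntegral : ℝ[X] →ₗ[ℝ] ℝ where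
  toFun p := ∫ x, p.eval x ∂gaussianReal 0 1
  map_add' p q := by
    simp only [eval_add]
    exact integral_add (integrable_eval_gaussianReal 0 1 p) (integrable_eval_gaussianReal 0 1 q)
  map_smul' c p := by simp only [eval_smul, smul_eq_mul, integral_const_mul, RingHom.id_apply]

lemma stdGaussianIntegral_apply (p : ℝ[X]) :
    stdGaussianIntegral p = ∫ x, p.eval x ∂gaussianReal 0 1 := rfl

lemma stdGaussianIntegral_derivative (p : ℝ[X]) :
    stdGaussianIntegral (derivative p) = stdGaussianIntegral (X * p) := by
  simpa [stdGaussianIntegral_apply] using integral_derivative_eval_gaussianReal 0 one_ne_zero p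

/-- The probabilists' Hermite polynomial `Hₙ` over `ℝ`. -/
noncomputable def realHermite (n : ℕ) : ℝ[X] := (hermite n).map (Int.castRingHom ℝ)

lemma realHermite_zero : realHermite 0 = 1 := by simp [realHermite]

lemma realHermite_succ (n : ℕ) :
    realHermite (n + 1) = X * realHermite n - derivative (realHermite n) := by
  simp only [realHermite, hermite_succ, Polynomial.map_sub, Polynomial.map_mul, Polynomial.map_X,
    derivative_map]

lemma iterate_derivative_realHermite_self (n : ℕ) :
    derivative^[n] (realHermite n) = C (n.factorial : ℝ) := by
  have hdeg : (derivative^[n] (realHermite n)).natDegree = 0 := by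
    refine Nat.eq_zero_of_le_zero ((natDegree_iterate_derivative _ _).trans ?_)
    rw [realHermite, (hermite_monic n).natDegree_map, natDegree_hermite, Nat.sub_self]
  rw [eq_C_of_natDegree_eq_zero hdeg, coeff_iterate_derivative, zero_add, Nat.descFactorial_self,
    realHermite, coeff_map, coeff_hermite_self]
  simp

lemma stdGaussianIntegral_iterate_derivative (n : ℕ) (p : ℝ[X]) :
    stdGaussianIntegral (derivative^[n] p) = stdGaussianIntegral (p * realHermite n) := by
  induction n generalizing p with
  | zero => simp [realHermite_zero]
  | succ n ih =>
    rw [Function.iterate_succ_apply, ih, realHermite_succ]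
    calc stdGaussianIntegral (derivative p * realHermite n)
        = stdGaussianIntegral (derivative (p * realHermite n))
          - stdGaussianIntegral (p * derivative (realHermite n)) := by
          rw [derivative_mul, map_add, add_sub_cancel_right]
      _ = stdGaussianIntegral (p * (X * realHermite n - derivative (realHermite n))) := by
          rw [stdGaussianIntegral_derivative, ← map_sub]
          ring_nf

lemma stdGaussianIntegral_realHermite_sq (n : ℕ) :
    stdGaussianIntegral (realHermite n ^ 2) = n.factorial := by
  rw [sq, ← stdGaussianIntegral_iterate_derivative, iterate_derivative_realHermite_self,
    stdGaussianIntegral_apply]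
  simp

/-- Stroock's coefficient bound in dimension one:
`|∫ φ⁽ⁿ⁾ dγ| ≤ √(n!) ‖φ‖_{L²(γ)}`. -/
theorem stroock_coefficient_bound (φ : Polynomial ℝ) (n : ℕ) :
    |∫ x : ℝ, (derivative^[n] φ).eval x ∂(gaussianReal 0 1)|
      ≤ Real.sqrt (n.factorial : ℝ) *
          Real.sqrt (∫ x : ℝ, (φ.eval x) ^ 2 ∂(gaussianReal 0 1)) := by
  have hermite_norm_sq : ∫ x, (realHermite n).eval x ^ 2 ∂gaussianReal 0 1 = n.factorial := by
    simpa only [stdGaussianIntegral_apply, eval_pow] using stdGaussianIntegral_realHermite_sq n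
  calc |∫ x, (derivative^[n] φ).eval x ∂gaussianReal 0 1|
      = |∫ x, φ.eval x * (realHermite n).eval x ∂gaussianReal 0 1| := by
        rw [← stdGaussianIntegral_apply, stdGaussianIntegral_iterate_derivative,
          stdGaussianIntegral_apply]
        simp only [eval_mul]
    _ ≤ √(∫ x, φ.eval x ^ 2 ∂gaussianReal 0 1) * √(n.factorial : ℝ) := by
        rw [← hermite_norm_sq]
        exact abs_integral_mul_le_sqrt_mul_sqrt
          (memLp_two_eval_gaussianReal 0 1 φ) (memLp_two_eval_gaussianReal 0 1 _)
    _ = _ := mul_comm _ _
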